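/- Let N ≥ 1 and q > 0, q ≠ 1 real. Set D = (K^{1/2} − K^{−1/2})/(q − q^{−1}) and X = E + F. Then the matrix identity D²·X − (q + q^{−1})·D·X·D + X·D² = X holds. That is, in the (N+1)-dimensional irreducible representation of U_q sl₂, the elements D and E+F satisfy the defining relation B_i² B_{i±1} − (q+q^{−1}) B_i B_{i±1} B_i + B_{i±1} B_i² = B_{i±1} of the nonstandard deformation U′_q so₃ of Gavrilik–Klimyk. (Core computation in the proof of Theorem 4.7.) -/

import Mathlib

/-!
`D` is diagonal with entries `d r = [(N - 2r)/2]`, so the left-hand side is `X` with its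
`(i, j)` entry scaled by `d i ² - (q + q⁻¹) d i d j + d j ²`. The matrix `X = E + F` lives on
the two diagonals `|i - j| = 1`, where `d i` and `d j` are consecutive quantum numbers
`[a]`, `[a - 1]`, and `[a]² - (q + q⁻¹)[a][a - 1] + [a - 1]² = 1` is an identity of Laurent
polynomials in `q` and `q ^ a`.
-/

noncomputable section

/-- The quantum number `[x] = (q^x − q^{−x})/(q − q⁻¹)` for real `x` (real powers). -/
def qnum (q : ℝ) (x : ℝ) : ℝ := (q ^ x - q ^ (-x)) / (q - q⁻¹)

/-- The matrix of `E` in the `(N+1)`-dimensional irreducible representation of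
`U_q sl₂`: `E_{r−1,r} = ([N−r+1]·[r])^{1/2}` for `1 ≤ r ≤ N`. -/
def Emat (q : ℝ) (N : ℕ) : Matrix (Fin (N + 1)) (Fin (N + 1)) ℝ :=
  fun r c => if (c : ℕ) = (r : ℕ) + 1 then
    Real.sqrt (qnum q ((N : ℝ) - (c : ℕ) + 1) * qnum q ((c : ℕ) : ℝ)) else 0

/-- `F = Eᵀ`. -/
def Fmat (q : ℝ) (N : ℕ) : Matrix (Fin (N + 1)) (Fin (N + 1)) ℝ :=
  Matrix.transpose (Emat q N)

/-- The diagonal matrix `K^{1/2}` with entries `q^{(N−2r)/2}`. -/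
def Khalf (q : ℝ) (N : ℕ) : Matrix (Fin (N + 1)) (Fin (N + 1)) ℝ :=
  Matrix.diagonal fun r => q ^ (((N : ℝ) - 2 * (r : ℕ)) / 2)

/-- The diagonal matrix `K^{−1/2}` with entries `q^{−(N−2r)/2}` (the inverse of `K^{1/2}`). -/
def Kneghalf (q : ℝ) (N : ℕ) : Matrix (Fin (N + 1)) (Fin (N + 1)) ℝ :=
  Matrix.diagonal fun r => q ^ (-(((N : ℝ) - 2 * (r : ℕ)) / 2))

/-- `D = (K^{1/2} − K^{−1/2})/(q − q⁻¹)`. -/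
def Dmat (q : ℝ) (N : ℕ) : Matrix (Fin (N + 1)) (Fin (N + 1)) ℝ :=
  (q - q⁻¹)⁻¹ • (Khalf q N - Kneghalf q N)

theorem Matrix.diagonal_sq_mul_sub_smul_add_apply {n R : Type*} [Fintype n] [DecidableEq n]
    [CommRing R] (d : n → R) (X : Matrix n n R) (c : R) (i j : n) :
    (Matrix.diagonal d ^ 2 * X - c • (Matrix.diagonal d * X * Matrix.diagonal d) +
      X * Matrix.diagonal d ^ 2) i j = (d i ^ 2 - c * d i * d j + d j ^ 2) * X i j := by
  simp only [sq, Matrix.diagonal_mul_diagonal, Matrix.add_apply, Matrix.sub_apply,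
    Matrix.smul_apply, Matrix.diagonal_mul, Matrix.mul_diagonal, smul_eq_mul]
  ring

theorem Matrix.diagonal_sq_mul_sub_smul_add_eq_self {n R : Type*} [Fintype n] [DecidableEq n]
    [CommRing R] {d : n → R} {X : Matrix n n R} {c : R}
    (h : ∀ i j, X i j ≠ 0 → d i ^ 2 - c * d i * d j + d j ^ 2 = 1) :
    Matrix.diagonal d ^ 2 * X - c • (Matrix.diagonal d * X * Matrix.diagonal d) +
      X * Matrix.diagonal d ^ 2 = X := by
  ext i j
  rw [Matrix.diagonal_sq_mul_sub_smul_add_apply]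
  by_cases hX : X i j = 0
  · rw [hX, mul_zero]
  · rw [h i j hX, one_mul]

theorem sub_inv_ne_zero_of_pos {q : ℝ} (hq0 : 0 < q) (hq1 : q ≠ 1) : q - q⁻¹ ≠ 0 := by
  rw [sub_ne_zero]
  intro h
  have : q * q = 1 := by rw [← mul_inv_cancel₀ hq0.ne', ← h]
  rcases hq1.lt_or_gt with hlt | hgt <;> nlinarith

theorem qnum_sq_sub_mul_add_sq {q : ℝ} (hq0 : 0 < q) (hq1 : q ≠ 1) (a : ℝ) :
    qnum q a ^ 2 - (q + q⁻¹) * qnum q a * qnum q (a - 1) + qnum q (a - 1) ^ 2 = 1 := by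
  have h1 : q ^ (-a) = (q ^ a)⁻¹ := Real.rpow_neg hq0.le a
  have h2 : q ^ (a - 1) = q ^ a / q := by rw [Real.rpow_sub hq0, Real.rpow_one]
  have h3 : q ^ (-(a - 1)) = q / q ^ a := by rw [neg_sub, Real.rpow_sub hq0, Real.rpow_one]
  have hu : q ^ a ≠ 0 := (Real.rpow_pos_of_pos hq0 a).ne'
  have hq : q ≠ 0 := hq0.ne'
  unfold qnum
  set x := q ^ a - q ^ (-a) with hx
  set y := q ^ (a - 1) - q ^ (-(a - 1)) with hy
  have key : x ^ 2 - (q + q⁻¹) * x * y + y ^ 2 = (q - q⁻¹) ^ 2 := by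
    rw [hx, hy, h1, h2, h3]
    field_simp
    ring
  calc (x / (q - q⁻¹)) ^ 2 - (q + q⁻¹) * (x / (q - q⁻¹)) * (y / (q - q⁻¹)) + (y / (q - q⁻¹)) ^ 2
      = (x ^ 2 - (q + q⁻¹) * x * y + y ^ 2) / (q - q⁻¹) ^ 2 := by
        generalize q - q⁻¹ = s; ring
    _ = 1 := by rw [key, div_self (pow_ne_zero 2 (sub_inv_ne_zero_of_pos hq0 hq1))]

theorem Dmat_eq_diagonal_qnum (q : ℝ) (N : ℕ) :
    Dmat q N = Matrix.diagonal fun r : Fin (N + 1) => qnum q (((N : ℝ) - 2 * (r : ℕ)) / 2) := by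
  ext i j
  by_cases h : i = j
  · subst h; simp [Dmat, Khalf, Kneghalf, qnum, div_eq_inv_mul]
  · simp [Dmat, Khalf, Kneghalf, h]

theorem Emat_add_Fmat_apply_ne_zero {q : ℝ} {N : ℕ} {i j : Fin (N + 1)}
    (h : (Emat q N + Fmat q N) i j ≠ 0) : (j : ℕ) = i + 1 ∨ (i : ℕ) = j + 1 := by
  by_contra! hij
  simp [Emat, Fmat, hij.1, hij.2] at h

theorem D_X_relation_general (q : ℝ) (hq0 : 0 < q) (hq1 : q ≠ 1) (N : ℕ) :
    Dmat q N ^ 2 * (Emat q N + Fmat q N) -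
      (q + q⁻¹) • (Dmat q N * (Emat q N + Fmat q N) * Dmat q N) +
      (Emat q N + Fmat q N) * Dmat q N ^ 2 =
      Emat q N + Fmat q N := by
  rw [Dmat_eq_diagonal_qnum]
  refine Matrix.diagonal_sq_mul_sub_smul_add_eq_self fun i j hX => ?_
  rcases Emat_add_Fmat_apply_ne_zero hX with hj | hi
  · have : ((N : ℝ) - 2 * (j : ℕ)) / 2 = ((N : ℝ) - 2 * (i : ℕ)) / 2 - 1 := by
      rw [hj]; push_cast; ring
    rw [this]
    exact qnum_sq_sub_mul_add_sq hq0 hq1 _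
  · have : ((N : ℝ) - 2 * (i : ℕ)) / 2 = ((N : ℝ) - 2 * (j : ℕ)) / 2 - 1 := by
      rw [hi]; push_cast; ring
    rw [this]
    linear_combination qnum_sq_sub_mul_add_sq hq0 hq1 (((N : ℝ) - 2 * (j : ℕ)) / 2)

/-- Core computation in the proof of Theorem 4.7: with `D = (K^{1/2} − K^{−1/2})/(q − q⁻¹)`
and `X = E + F`, the relation `D²X − (q+q⁻¹)·DXD + XD² = X` of the nonstandard
deformation `U′_q so₃` holds. -/
theorem D_X_relation (q : ℝ) (hq0 : 0 < q) (hq1 : q ≠ 1) (N : ℕ) (hN : 1 ≤ N) :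
    Dmat q N ^ 2 * (Emat q N + Fmat q N) -
      (q + q⁻¹) • (Dmat q N * (Emat q N + Fmat q N) * Dmat q N) +
      (Emat q N + Fmat q N) * Dmat q N ^ 2 =
      Emat q N + Fmat q N :=
  D_X_relation_general q hq0 hq1 N
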